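/- arXiv:1001.5098 — 2 statements merged into one kernel-verified Lean document; each statement's English description precedes it below -/
import Mathlib

section
/- For a Blaschke product $B(z) = \prod_{n=1}^{\infty} \frac{\bar{a}_n}{|a_n|}\frac{a_n - z}{1 - \bar{a}_n z}$ with zeros $\{a_n\}$, the identity $\frac{1 - |B(z)|^2}{1 - |z|^2} = \sum_n |B_n(z)|^2 \frac{1 - |a_n|^2}{|1 - \bar{a}_n z|^2}$ holds for all $z$ in the open unit disc, where $B_n(z) = \prod_{j=1}^{n-1} \frac{\bar{a}_j}{|a_j|}\frac{a_j - z}{1 - \bar{a}_j z}$ is the partial product (with $B_1 \equiv 1$). -/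
/-!
Write `bₐ(z) = (ā/|a|)(a - z)/(1 - ā z)`. The identity
`|1 - ā z|² - |a - z|² = (1 - |a|²)(1 - |z|²)` turns `1 - |bₐ(z)|²` into
`(1 - |a|²)(1 - |z|²)/|1 - ā z|²`, so `(1 - |z|²)` times the `n`-th term of the series is
`|Bₙ(z)|² - |Bₙ₊₁(z)|²` and the partial sums telescope to `(1 - |B_N(z)|²)/(1 - |z|²)`.
Since `|1 - bₐ(z)| ≤ (1 + |z|)/(1 - |z|) · (1 - |a|)`, the Blaschke condition makes the product
converge, and letting `N → ∞` gives the identity.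
-/

open Complex Finset ComplexConjugate

noncomputable def blaschkeFactor (a z : ℂ) : ℂ :=
  (conj a / (‖a‖ : ℂ)) * ((a - z) / (1 - conj a * z))

theorem Finset.sum_range_prod_mul_one_sub {R : Type*} [CommRing R] (r : ℕ → R) (N : ℕ) :
    ∑ n ∈ range N, (∏ j ∈ range n, r j) * (1 - r n) = 1 - ∏ j ∈ range N, r j := by
  simp_rw [mul_one_sub, ← prod_range_succ]
  simpa using sum_range_sub' (fun n => ∏ j ∈ range n, r j) N

theorem Finset.sum_range_norm_prod_sq_mul_one_sub_norm_sq {𝕜 : Type*} [NormedField 𝕜]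
    (f : ℕ → 𝕜) (N : ℕ) :
    ∑ n ∈ range N, ‖∏ j ∈ range n, f j‖ ^ 2 * (1 - ‖f n‖ ^ 2) =
      1 - ‖∏ j ∈ range N, f j‖ ^ 2 := by
  simp_rw [norm_prod, ← prod_pow]
  exact sum_range_prod_mul_one_sub (fun n => ‖f n‖ ^ 2) N

theorem norm_one_sub_conj_mul_sq_sub_norm_sub_sq (a z : ℂ) :
    ‖1 - conj a * z‖ ^ 2 - ‖a - z‖ ^ 2 = (1 - ‖a‖ ^ 2) * (1 - ‖z‖ ^ 2) := by
  simp only [Complex.sq_norm, normSq_apply, sub_re, sub_im, mul_re, mul_im, conj_re, conj_im, one_re,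
    one_im]
  ring

theorem one_sub_norm_le_norm_one_sub_conj_mul {a : ℂ} (ha : ‖a‖ ≤ 1) (z : ℂ) :
    1 - ‖z‖ ≤ ‖1 - conj a * z‖ :=
  calc 1 - ‖z‖ ≤ 1 - ‖conj a * z‖ := by
        rw [norm_mul, RCLike.norm_conj]
        gcongr
        exact mul_le_of_le_one_left (norm_nonneg z) ha
    _ ≤ ‖1 - conj a * z‖ := by simpa using norm_sub_norm_le 1 (conj a * z)

theorem norm_blaschkeFactor {a : ℂ} (ha : a ≠ 0) (z : ℂ) :
    ‖blaschkeFactor a z‖ = ‖a - z‖ / ‖1 - conj a * z‖ := by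
  simp [blaschkeFactor, ha]

theorem one_sub_norm_blaschkeFactor_sq {a z : ℂ} (ha : a ≠ 0) (hd : 1 - conj a * z ≠ 0) :
    1 - ‖blaschkeFactor a z‖ ^ 2 = (1 - ‖a‖ ^ 2) * (1 - ‖z‖ ^ 2) / ‖1 - conj a * z‖ ^ 2 := by
  rw [norm_blaschkeFactor ha, ← norm_one_sub_conj_mul_sq_sub_norm_sub_sq, div_pow]
  rw [sub_div, div_self (pow_ne_zero 2 (norm_ne_zero_iff.mpr hd))]

theorem one_sub_blaschkeFactor {a z : ℂ} (ha : a ≠ 0) (hd : 1 - conj a * z ≠ 0) :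
    1 - blaschkeFactor a z = (1 - ‖a‖) * (‖a‖ + conj a * z) / (‖a‖ * (1 - conj a * z)) := by
  have hr : (‖a‖ : ℂ) ≠ 0 := by exact_mod_cast norm_ne_zero_iff.mpr ha
  have hconj : conj a * a = (‖a‖ : ℂ) ^ 2 := by rw [mul_comm]; exact mul_conj' a
  rw [blaschkeFactor, eq_div_iff (mul_ne_zero hr hd)]
  field_simp
  linear_combination -hconj

theorem norm_one_sub_blaschkeFactor_le {a z : ℂ} (ha₀ : a ≠ 0) (ha₁ : ‖a‖ ≤ 1) (hz : ‖z‖ < 1) :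
    ‖1 - blaschkeFactor a z‖ ≤ (1 + ‖z‖) / (1 - ‖z‖) * (1 - ‖a‖) := by
  have hd := one_sub_norm_le_norm_one_sub_conj_mul ha₁ z
  have hd₀ : 1 - conj a * z ≠ 0 := norm_pos_iff.mp (by linarith)
  have hnum : ‖(‖a‖ : ℂ) + conj a * z‖ ≤ ‖a‖ * (1 + ‖z‖) :=
    calc _ ≤ ‖(‖a‖ : ℂ)‖ + ‖conj a * z‖ := norm_add_le _ _
      _ = ‖a‖ * (1 + ‖z‖) := by simp; ring
  have h1 : ‖(1 : ℂ) - ‖a‖‖ = 1 - ‖a‖ := by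
    rw [← ofReal_one, ← ofReal_sub, norm_real, Real.norm_of_nonneg (by linarith)]
  have ha : 0 < ‖a‖ := norm_pos_iff.mpr ha₀
  have hz' : 0 < 1 - ‖z‖ := by linarith
  rw [one_sub_blaschkeFactor ha₀ hd₀, norm_div, norm_mul, norm_mul, h1, norm_real,
    Real.norm_of_nonneg ha.le, div_le_iff₀ (by positivity)]
  calc (1 - ‖a‖) * ‖(‖a‖ : ℂ) + conj a * z‖ ≤ (1 - ‖a‖) * (‖a‖ * (1 + ‖z‖)) := by
        gcongr
     _ = (1 + ‖z‖) / (1 - ‖z‖) * (1 - ‖a‖) * (‖a‖ * (1 - ‖z‖)) := by field_simp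
     _ ≤ (1 + ‖z‖) / (1 - ‖z‖) * (1 - ‖a‖) * (‖a‖ * ‖1 - conj a * z‖) := by
        gcongr

theorem multipliable_blaschkeFactor {a : ℕ → ℂ} (ha₀ : ∀ n, a n ≠ 0) (ha₁ : ∀ n, ‖a n‖ ≤ 1)
    (hsum : Summable fun n => 1 - ‖a n‖) {z : ℂ} (hz : ‖z‖ < 1) :
    Multipliable fun n => blaschkeFactor (a n) z := by
  have hsummable : Summable fun n => ‖blaschkeFactor (a n) z - 1‖ :=
    (hsum.mul_left ((1 + ‖z‖) / (1 - ‖z‖))).of_nonneg_of_le (fun _ => norm_nonneg _)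
      fun n => by rw [norm_sub_rev]; exact norm_one_sub_blaschkeFactor_le (ha₀ n) (ha₁ n) hz
  simpa using multipliable_one_add_of_summable hsummable

theorem blaschke_identity_range {a : ℕ → ℂ} (ha₀ : ∀ n, a n ≠ 0) (ha₁ : ∀ n, ‖a n‖ ≤ 1)
    {z : ℂ} (hz : ‖z‖ < 1) (N : ℕ) :
    ∑ n ∈ range N, ‖∏ j ∈ range n, blaschkeFactor (a j) z‖ ^ 2 *
        ((1 - ‖a n‖ ^ 2) / ‖1 - conj (a n) * z‖ ^ 2)
      = (1 - ‖∏ j ∈ range N, blaschkeFactor (a j) z‖ ^ 2) / (1 - ‖z‖ ^ 2) := by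
  have hz2 : 0 < 1 - ‖z‖ ^ 2 := by nlinarith [norm_nonneg z]
  rw [← sum_range_norm_prod_sq_mul_one_sub_norm_sq, eq_div_iff hz2.ne', sum_mul]
  refine sum_congr rfl fun n _ => ?_
  have hd : 0 < ‖1 - conj (a n) * z‖ :=
    (sub_pos.mpr hz).trans_le (one_sub_norm_le_norm_one_sub_conj_mul (ha₁ n) z)
  rw [one_sub_norm_blaschkeFactor_sq (ha₀ n) (norm_pos_iff.mp hd)]
  ring

/-- The Ahern–Clark identity: for a Blaschke product `B` with zeros `a n`,
`(1 - |B z|²)/(1 - |z|²) = ∑ₙ |Bₙ z|² (1 - |aₙ|²)/|1 - conj(aₙ) z|²`,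
where `Bₙ` is the partial product of the first `n` factors (`B₀ ≡ 1`). -/
theorem blaschke_identity
    (a : ℕ → ℂ) (ha : ∀ n, 0 < ‖a n‖ ∧ ‖a n‖ < 1)
    (hsum : Summable fun n => 1 - ‖a n‖)
    (B : ℂ → ℂ)
    (hB : ∀ z, B z = ∏' n, ((starRingEnd ℂ) (a n) / (‖a n‖ : ℂ)) *
        ((a n - z) / (1 - (starRingEnd ℂ) (a n) * z)))
    (Bp : ℕ → ℂ → ℂ)
    (hBp : ∀ n z, Bp n z = ∏ j ∈ Finset.range n,
        ((starRingEnd ℂ) (a j) / (‖a j‖ : ℂ)) *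
        ((a j - z) / (1 - (starRingEnd ℂ) (a j) * z)))
    (z : ℂ) (hz : ‖z‖ < 1) :
    (1 - ‖B z‖ ^ 2) / (1 - ‖z‖ ^ 2)
      = ∑' n, ‖Bp n z‖ ^ 2 *
          ((1 - ‖a n‖ ^ 2) / ‖1 - (starRingEnd ℂ) (a n) * z‖ ^ 2) := by
  have ha₀ : ∀ n, a n ≠ 0 := fun n => norm_pos_iff.mp (ha n).1
  have ha₁ : ∀ n, ‖a n‖ ≤ 1 := fun n => (ha n).2.le
  have hBp_eq : ∀ n, Bp n z = ∏ j ∈ range n, blaschkeFactor (a j) z := fun n => hBp n z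
  have hprod : HasProd (fun n => blaschkeFactor (a n) z) (B z) := by
    rw [hB z]
    exact (multipliable_blaschkeFactor ha₀ ha₁ hsum hz).hasProd
  have hterm_nonneg : ∀ n, 0 ≤ ‖Bp n z‖ ^ 2 *
      ((1 - ‖a n‖ ^ 2) / ‖1 - (starRingEnd ℂ) (a n) * z‖ ^ 2) := fun n => by
    have : 0 ≤ 1 - ‖a n‖ ^ 2 := sub_nonneg.mpr (pow_le_one₀ (norm_nonneg _) (ha₁ n))
    positivity
  refine (HasSum.tsum_eq ?_).symm
  rw [hasSum_iff_tendsto_nat_of_nonneg hterm_nonneg]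
  simp_rw [hBp_eq, blaschke_identity_range ha₀ ha₁ hz]
  exact (tendsto_const_nhds.sub (hprod.tendsto_prod_nat.norm.pow 2)).div_const _
end

section
/- Let $a \in (0,1)$, $d = 1 - a$, $\beta \in (0,1]$, $\rho = d^{\beta - 1}$, and $r_0 = \frac{a + a^{\rho}}{1 + a^{\rho+1}}$. Then $1 - r_0 \ge \frac{1}{4} d^{1+\beta}$. -/
/-!
Writing `d = 1 - a` and `ρ = d^(β-1) ≥ 1`, one has `1 - r₀ = d (1 - a^ρ) / (1 + a^(ρ+1))`, whose
denominator is at most `2`. Since `1 - d ≤ (1 + d)⁻¹`, Bernoulli's inequality gives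
`a^ρ ≤ (1 + d)^(-ρ) ≤ (1 + ρ d)⁻¹ = (1 + d^β)⁻¹`, so the numerator is at least `d · d^β / 2`.
-/

open Real

lemma one_sub_add_rpow_div_one_add_rpow {a : ℝ} (ha : 0 < a) (ρ : ℝ) :
    1 - (a + a ^ ρ) / (1 + a ^ (ρ + 1)) = (1 - a) * (1 - a ^ ρ) / (1 + a ^ (ρ + 1)) := by
  have hden : 0 < 1 + a ^ (ρ + 1) := by positivity
  rw [rpow_add_one ha.ne'] at hden ⊢
  field_simp
  ring

lemma one_sub_rpow_le_inv_one_add_mul {d ρ : ℝ} (hd0 : 0 ≤ d) (hd1 : d ≤ 1) (hρ : 1 ≤ ρ) :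
    (1 - d) ^ ρ ≤ (1 + ρ * d)⁻¹ :=
  calc (1 - d) ^ ρ ≤ (1 + d)⁻¹ ^ ρ := by
        refine rpow_le_rpow (by linarith) ?_ (by linarith)
        rw [← one_div, le_div_iff₀ (by linarith)]
        nlinarith
    _ = ((1 + d) ^ ρ)⁻¹ := inv_rpow (by linarith) ρ
    _ ≤ (1 + ρ * d)⁻¹ :=
        inv_anti₀ (by nlinarith) (one_add_mul_self_le_rpow_one_add (by linarith) hρ)

/-- With `d = 1 - a`, `ρ = d^(β-1)`, and `r₀ = (a + a^ρ)/(1 + a^(ρ+1))`,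
one has `1 - r₀ ≥ (1/4) d^(1+β)`. -/
theorem one_sub_r_lower_bound (a β : ℝ) (ha0 : 0 < a) (ha1 : a < 1)
    (hβ0 : 0 < β) (hβ1 : β ≤ 1) :
    1 - (a + a ^ ((1 - a) ^ (β - 1))) / (1 + a ^ ((1 - a) ^ (β - 1) + 1))
      ≥ (1 / 4) * (1 - a) ^ (1 + β) := by
  set d := 1 - a
  set ρ := d ^ (β - 1) with hρdef
  have hd0 : 0 < d := by linarith
  have hρ : 1 ≤ ρ := one_le_rpow_of_pos_of_le_one_of_nonpos hd0 (by linarith) (by linarith)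
  have hρd : ρ * d = d ^ β := by rw [hρdef, rpow_sub_one hd0.ne', div_mul_cancel₀ _ hd0.ne']
  have hdβ0 : 0 < d ^ β := rpow_pos_of_pos hd0 β
  have hdβ : d ^ β ≤ 1 := rpow_le_one hd0.le (by linarith) hβ0.le
  have hnum : d ^ β / 2 ≤ 1 - a ^ ρ := by
    have h := one_sub_rpow_le_inv_one_add_mul hd0.le (by linarith) hρ
    rw [hρd, sub_sub_cancel] at h
    have hinv : (1 + d ^ β)⁻¹ ≤ 1 - d ^ β / 2 := by
      rw [inv_le_iff_one_le_mul₀ (by positivity)]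
      nlinarith [mul_nonneg hdβ0.le (sub_nonneg.2 hdβ)]
    linarith
  have hden : 1 + a ^ (ρ + 1) ≤ 2 := by
    linarith [rpow_le_one ha0.le ha1.le (by linarith : 0 ≤ ρ + 1)]
  rw [one_sub_add_rpow_div_one_add_rpow ha0, rpow_add hd0, rpow_one, ge_iff_le]
  calc 1 / 4 * (d * d ^ β) = d * (d ^ β / 2) / 2 := by ring
    _ ≤ d * (1 - a ^ ρ) / (1 + a ^ (ρ + 1)) :=
        div_le_div₀ (mul_nonneg hd0.le (by linarith)) (mul_le_mul_of_nonneg_left hnum hd0.le)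
          (by positivity) hden
end
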